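/- Let d ≥ 4 and let U be the d × d unitary matrix defined by U = Σ_{j=1}^d λ_j |v_j⟩⟨v_j| with λ_1 = 1, λ_2 = -1, λ_{j+2} = exp(2πij/(d-2)), and eigenvectors v_1 = (1/√2, 1/√(2d-2), ..., 1/√(2d-2)), v_2 = (1/√2, -1/√(2d-2), ..., -1/√(2d-2)), v_{j+2} = (1/√(d-1))·(0, 1, ω^j, ω^{2j}, ..., ω^{j(d-2)}) where ω = exp(2πi/(d-1)). Then for all 2 ≤ k, ℓ ≤ d with k ≠ ℓ, the entry ⟨k|U|ℓ⟩ is nonzero. -/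

import Mathlib

/-
For k, ℓ ≥ 2 the contributions of v₁ and v₂ to ⟨k|U|ℓ⟩ cancel, and the remaining terms
form a geometric sum: with ζ = exp(2πi/(d-2)) ω^(k-ℓ), the entry is (ζ/(d-1)) Σ_{j<d-2} ζ^j.
Such a sum can only vanish if ζ^(d-2) = 1. But ζ^(d-2) = (ω^(d-2))^(k-ℓ), where ω^(d-2) is again
a primitive (d-1)-th root of unity since gcd(d-2, d-1) = 1, and 0 < |k-ℓ| < d-1.
-/

/-- `uroot n = exp(2πi/n)`, a primitive `n`-th root of unity. -/
noncomputable def uroot (n : ℕ) : ℂ := Complex.exp (2 * Real.pi * Complex.I / n)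

/-- The eigenvectors `v₁, …, v_d` (0-indexed) described in the paper:
`v 0 = (1/√2, 1/√(2d-2), …)`, `v 1 = (1/√2, -1/√(2d-2), …)`, and for `t ≥ 2`,
`v t = (1/√(d-1)) (0, 1, ω^{j}, ω^{2j}, …, ω^{j(d-2)})` with `j = t - 1` and
`ω = exp(2πi/(d-1))`. -/
noncomputable def evec (d : ℕ) (t : Fin d) : Fin d → ℂ :=
  if t.val = 0 then
    fun a => if a.val = 0 then (Real.sqrt 2 : ℂ)⁻¹
             else ((Real.sqrt (2 * (d : ℝ) - 2) : ℝ) : ℂ)⁻¹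
  else if t.val = 1 then
    fun a => if a.val = 0 then (Real.sqrt 2 : ℂ)⁻¹
             else -((Real.sqrt (2 * (d : ℝ) - 2) : ℝ) : ℂ)⁻¹
  else
    fun a => if a.val = 0 then 0
             else ((Real.sqrt ((d : ℝ) - 1) : ℝ) : ℂ)⁻¹ *
                    uroot (d - 1) ^ ((t.val - 1) * (a.val - 1))

/-- The eigenvalues: `λ 0 = 1`, `λ 1 = -1`, and `λ t = exp(2πi(t-1)/(d-2))` for `t ≥ 2`. -/
noncomputable def eval' (d : ℕ) (t : Fin d) : ℂ :=
  if t.val = 0 then 1 else if t.val = 1 then -1 else uroot (d - 2) ^ (t.val - 1)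

/-- The matrix `U = Σ_t λ_t |v_t⟩⟨v_t|`. -/
noncomputable def Umat (d : ℕ) : Matrix (Fin d) (Fin d) ℂ :=
  fun a b => ∑ t, eval' d t * evec d t a * (starRingEnd ℂ) (evec d t b)

theorem IsPrimitiveRoot.zpow_ne_one {G : Type*} [DivisionCommMonoid G] {ζ : G} {n : ℕ}
    (h : IsPrimitiveRoot ζ n) {m : ℤ} (hm0 : m ≠ 0) (hmn : |m| < n) : ζ ^ m ≠ 1 := by
  rw [Ne, h.zpow_eq_one_iff_dvd]
  intro hdvd
  exact hmn.not_ge (Int.le_of_dvd (abs_pos.mpr hm0) ((dvd_abs _ _).mpr hdvd))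

theorem geom_sum_ne_zero_of_pow_ne_one {R : Type*} [Ring R] {x : R} {n : ℕ}
    (hx : x ^ n ≠ 1) : ∑ i ∈ Finset.range n, x ^ i ≠ 0 := by
  intro h
  apply hx
  rw [← sub_eq_zero, ← geom_sum_mul, h, zero_mul]

theorem isPrimitiveRoot_uroot {n : ℕ} (hn : n ≠ 0) : IsPrimitiveRoot (uroot n) n :=
  Complex.isPrimitiveRoot_exp n hn

theorem uroot_pow_self (n : ℕ) : uroot n ^ n = 1 := by
  rcases eq_or_ne n 0 with rfl | hn
  · exact pow_zero _
  · exact (isPrimitiveRoot_uroot hn).pow_eq_one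

theorem conj_uroot_pow {n : ℕ} (hn : n ≠ 0) (k : ℕ) :
    starRingEnd ℂ (uroot n ^ k) = (uroot n ^ k)⁻¹ :=
  (Complex.inv_eq_conj (((isPrimitiveRoot_uroot hn).norm'_eq_one hn ▸ norm_pow _ k).trans
    (one_pow k))).symm

theorem ofReal_sqrt_inv_mul_conj {x : ℝ} (hx : 0 ≤ x) :
    ((Real.sqrt x : ℂ))⁻¹ * starRingEnd ℂ ((Real.sqrt x : ℂ))⁻¹ = (x : ℂ)⁻¹ := by
  rw [map_inv₀, Complex.conj_ofReal, ← mul_inv, ← Complex.ofReal_mul, Real.mul_self_sqrt hx]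

theorem eval'_mul_evec_mul_conj_zero_add_one (e : ℕ) (a b : Fin (e + 2)) (ha : a ≠ 0)
    (hb : b ≠ 0) :
    eval' (e + 2) 0 * evec (e + 2) 0 a * starRingEnd ℂ (evec (e + 2) 0 b) +
      eval' (e + 2) 1 * evec (e + 2) 1 a * starRingEnd ℂ (evec (e + 2) 1 b) = 0 := by
  simp [eval', evec, Fin.val_ne_zero_iff.mpr ha, Fin.val_ne_zero_iff.mpr hb]

theorem eval'_mul_evec_mul_conj_succ_succ (e : ℕ) (i : Fin e) (a b : Fin (e + 2))
    (ha : a ≠ 0) (hb : b ≠ 0) :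
    eval' (e + 2) i.succ.succ * evec (e + 2) i.succ.succ a *
        starRingEnd ℂ (evec (e + 2) i.succ.succ b) =
      ((e : ℂ) + 1)⁻¹ * (uroot e * uroot (e + 1) ^ ((a : ℤ) - b)) ^ (i.val + 1) := by
  have ha1 : 1 ≤ a.val := Nat.one_le_iff_ne_zero.mpr (Fin.val_ne_zero_iff.mpr ha)
  have hb1 : 1 ≤ b.val := Nat.one_le_iff_ne_zero.mpr (Fin.val_ne_zero_iff.mpr hb)
  have hω : uroot (e + 1) ≠ 0 := Complex.exp_ne_zero _
  simp only [eval', evec, Fin.val_succ, Nat.add_eq_zero_iff, one_ne_zero, and_false,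
    add_eq_right, if_false, Fin.val_ne_zero_iff.mpr ha, Fin.val_ne_zero_iff.mpr hb,
    show e + 2 - 1 = e + 1 by omega, show e + 2 - 2 = e by omega,
    show i.val + 1 + 1 - 1 = i.val + 1 by omega, map_mul, Nat.succ_eq_add_one,
    conj_uroot_pow (Nat.succ_ne_zero e)]
  have hpow : uroot (e + 1) ^ ((i.val + 1) * (a.val - 1)) *
      (uroot (e + 1) ^ ((i.val + 1) * (b.val - 1)))⁻¹ =
        (uroot (e + 1) ^ ((a : ℤ) - b)) ^ (i.val + 1) := by
    rw [← zpow_natCast, ← zpow_natCast, ← zpow_neg, ← zpow_add₀ hω, ← zpow_natCast, ← zpow_mul]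
    push_cast [Nat.cast_sub ha1, Nat.cast_sub hb1]
    ring_nf
  have hnorm : ((Real.sqrt ((e + 2 : ℕ) - 1) : ℂ))⁻¹ *
      starRingEnd ℂ ((Real.sqrt ((e + 2 : ℕ) - 1) : ℂ))⁻¹ = ((e : ℂ) + 1)⁻¹ := by
    rw [ofReal_sqrt_inv_mul_conj (by simp; linarith)]
    push_cast
    ring
  rw [mul_pow, ← hpow, ← hnorm]
  ring

theorem Umat_apply_eq_mul_geom_sum (e : ℕ) (a b : Fin (e + 2)) (ha : a ≠ 0) (hb : b ≠ 0) :
    Umat (e + 2) a b = ((e : ℂ) + 1)⁻¹ * (uroot e * uroot (e + 1) ^ ((a : ℤ) - b)) *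
      ∑ j ∈ Finset.range e, (uroot e * uroot (e + 1) ^ ((a : ℤ) - b)) ^ j := by
  unfold Umat
  rw [Fin.sum_univ_succ, Fin.sum_univ_succ, ← add_assoc, Fin.succ_zero_eq_one,
    eval'_mul_evec_mul_conj_zero_add_one e a b ha hb, zero_add, mul_assoc, Finset.mul_sum,
    Finset.mul_sum, ← Fin.sum_univ_eq_sum_range]
  refine Finset.sum_congr rfl fun i _ => ?_
  rw [eval'_mul_evec_mul_conj_succ_succ e i a b ha hb, pow_succ']

theorem stmt5_general (d : ℕ) :
    ∀ a b : Fin d, 1 ≤ a.val → 1 ≤ b.val → a ≠ b → Umat d a b ≠ 0 := by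
  intro a b ha hb hab
  obtain ⟨e, rfl⟩ : ∃ e, d = e + 2 := ⟨d - 2, by omega⟩
  have ha0 : a ≠ 0 := Fin.val_ne_zero_iff.mp (by omega)
  have hb0 : b ≠ 0 := Fin.val_ne_zero_iff.mp (by omega)
  have hab' : (a : ℤ) - b ≠ 0 := sub_ne_zero.mpr (by exact_mod_cast Fin.val_ne_of_ne hab)
  have hab_lt : |(a : ℤ) - b| < (e + 1 : ℕ) := by rw [abs_lt]; push_cast; omega
  have hω : IsPrimitiveRoot (uroot (e + 1) ^ e) (e + 1) :=
    (isPrimitiveRoot_uroot e.succ_ne_zero).pow_of_coprime e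
      (Nat.coprime_self_add_right.mpr (Nat.coprime_one_right e))
  rw [Umat_apply_eq_mul_geom_sum e a b ha0 hb0]
  set ζ := uroot e * uroot (e + 1) ^ ((a : ℤ) - b) with hζ_def
  have hζ : ζ ^ e ≠ 1 := by
    rw [hζ_def, mul_pow, uroot_pow_self, one_mul, ← zpow_natCast, ← zpow_mul, mul_comm, zpow_mul,
      zpow_natCast]
    exact hω.zpow_ne_one hab' hab_lt
  exact mul_ne_zero (mul_ne_zero (inv_ne_zero (Nat.cast_add_one_ne_zero e))
    (mul_ne_zero (Complex.exp_ne_zero _) (zpow_ne_zero _ (Complex.exp_ne_zero _))))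
    (geom_sum_ne_zero_of_pow_ne_one hζ)

theorem stmt5 (d : ℕ) (hd : 4 ≤ d) :
    ∀ a b : Fin d, 1 ≤ a.val → 1 ≤ b.val → a ≠ b → Umat d a b ≠ 0 :=
  stmt5_general d
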